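/- If a regular topological space X has a countable network, then X admits a small base satisfying condition (D): there exist M ⊆ ℕ^ℕ and an M-decreasing base {U_α : α ∈ M} of the topology such that U_α = ⋃_k D_k(α) for all α ∈ M, where D_k(α) = ⋂{U_β : β ∈ M, β_i = α_i for i ≤ k}; and conversely, a space with such a small base has a countable network, namely {D_k(α) : α ∈ M, k ∈ ℕ}. -/

import Mathlib

open Filter Set Topology Pointwise Bornology

section Defs

variable {X : Type*} [TopologicalSpace X]

/-- `N` is a network at `x`: every neighborhood of `x` contains a member of `N` containing `x`. -/
def IsNetworkAt (N : Set (Set X)) (x : X) : Prop :=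
  ∀ O ∈ nhds x, ∃ n ∈ N, x ∈ n ∧ n ⊆ O

/-- `N` is a `cn`-network at `x`. -/
def IsCnNetworkAt (N : Set (Set X)) (x : X) : Prop :=
  ∀ O ∈ nhds x, (⋃₀ {n | n ∈ N ∧ x ∈ n ∧ n ⊆ O}) ∈ nhds x

/-- `N` is a `cp`-network (Pytkeev network with `x ∈ N`) at `x`. -/
def IsCpNetworkAt (N : Set (Set X)) (x : X) : Prop :=
  IsNetworkAt N x ∧
  ∀ A : Set X, x ∈ closure A \ A → ∀ O ∈ nhds x,
    ∃ n ∈ N, x ∈ n ∧ n ⊆ O ∧ (n ∩ A).Infinite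

/-- `N` is a `ck`-network at `x`. -/
def IsCkNetworkAt (N : Set (Set X)) (x : X) : Prop :=
  ∀ O ∈ nhds x, ∃ U ∈ nhds x, ∀ K : Set X, K ⊆ U → IsCompact K →
    ∃ F : Finset (Set X), ↑F ⊆ N ∧ (∀ f ∈ F, x ∈ f) ∧
      K ⊆ ⋃₀ ↑F ∧ ⋃₀ (↑F : Set (Set X)) ⊆ O

/-- `N` is a `cs*`-network at `x`. -/
def IsCsStarNetworkAt (N : Set (Set X)) (x : X) : Prop :=
  ∀ u : ℕ → X, Tendsto u atTop (nhds x) → ∀ O ∈ nhds x,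
    ∃ n ∈ N, x ∈ n ∧ n ⊆ O ∧ {k | u k ∈ n}.Infinite

/-- `N` is a network for the topology of `X`. -/
def IsNetwork (N : Set (Set X)) : Prop :=
  ∀ O : Set X, IsOpen O → ∀ x ∈ O, ∃ n ∈ N, x ∈ n ∧ n ⊆ O

/-- The set `D_k(α)`: the intersection of all `U β` over `β ∈ M` agreeing with `α`
on the first `k` coordinates. -/
def Dk (M : Set (ℕ → ℕ)) (U : (ℕ → ℕ) → Set X) (k : ℕ) (α : ℕ → ℕ) : Set X :=
  ⋂ β ∈ {β ∈ M | ∀ i < k, β i = α i}, U β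

/-- `{U α : α ∈ M}` is an `M`-decreasing neighborhood base (small base) at `x`. -/
def IsSmallBaseAt (M : Set (ℕ → ℕ)) (U : (ℕ → ℕ) → Set X) (x : X) : Prop :=
  (∀ α ∈ M, ∀ β ∈ M, α ≤ β → U β ⊆ U α) ∧
  (∀ α ∈ M, U α ∈ nhds x) ∧
  (∀ O ∈ nhds x, ∃ α ∈ M, U α ⊆ O)

/-- `{U α : α ∈ M}` is an `M`-decreasing base of the topology (small base of `X`). -/
def IsSmallBaseTop (M : Set (ℕ → ℕ)) (U : (ℕ → ℕ) → Set X) : Prop :=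
  (∀ α ∈ M, ∀ β ∈ M, α ≤ β → U β ⊆ U α) ∧
  (∀ α ∈ M, IsOpen (U α)) ∧
  (∀ O : Set X, IsOpen O → ∀ x ∈ O, ∃ α ∈ M, x ∈ U α ∧ U α ⊆ O)

/-- Condition (D): `U α = ⋃ₖ D_k(α)` for every `α ∈ M`. -/
def CondD (M : Set (ℕ → ℕ)) (U : (ℕ → ℕ) → Set X) : Prop :=
  ∀ α ∈ M, U α = ⋃ k : ℕ, Dk M U k α

end Defs

/-- The strong Pytkeev property of Tsaban and Zdomskyy. -/
def HasStrongPytkeev (X : Type*) [TopologicalSpace X] : Prop :=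
  ∀ x : X, ∃ D : Set (Set X), D.Countable ∧
    ∀ U ∈ nhds x, ∀ A : Set X, x ∈ closure A \ A →
      ∃ d ∈ D, d ⊆ U ∧ (d ∩ A).Infinite

/-!
Enumerate a countable network as `f : ℕ → Set X`; every nonempty open set is `⋃ j, f (c j)` for
some `c : ℕ → ℕ`. Index the base by these `c`, each followed by the indicator of its graph: the
codes then form an antichain of `ℕ^ℕ`, so the base is trivially `M`-decreasing. Condition (D)
holds because a point of `⋃ j, f (c j)` lies in some `f (c j)`, and `c j` is fixed by a finite
prefix of the code. Conversely `D_k(α)` depends only on `α 0, …, α (k - 1)`, so there are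
countably many of them, and (D) turns the base into a network of them.
-/

section Dk

variable {X : Type*} {M : Set (ℕ → ℕ)} {U : (ℕ → ℕ) → Set X}

lemma Dk_subset {k : ℕ} {α : ℕ → ℕ} (hα : α ∈ M) : Dk M U k α ⊆ U α :=
  biInter_subset_of_mem ⟨hα, fun _ _ => rfl⟩

lemma Dk_congr {k : ℕ} {α α' : ℕ → ℕ} (h : ∀ i < k, α i = α' i) :
    Dk M U k α = Dk M U k α' := by
  have : {β ∈ M | ∀ i < k, β i = α i} = {β ∈ M | ∀ i < k, β i = α' i} := by
    ext β
    exact and_congr_right fun _ => forall₂_congr fun i hi => by rw [h i hi]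
  simp only [Dk, this]

lemma countable_setOf_Dk (M : Set (ℕ → ℕ)) (U : (ℕ → ℕ) → Set X) :
    {D | ∃ α ∈ M, ∃ k : ℕ, D = Dk M U k α}.Countable := by
  refine (countable_range fun p : Σ k, Fin k → ℕ =>
    Dk M U p.1 fun i => if h : i < p.1 then p.2 ⟨i, h⟩ else 0).mono ?_
  rintro D ⟨α, -, k, rfl⟩
  exact ⟨⟨k, fun i => α i⟩, Dk_congr fun i hi => by simp [hi]⟩

lemma condD_of_forall_mem
    (h : ∀ α ∈ M, ∀ x ∈ U α, ∃ k, ∀ β ∈ M, (∀ i < k, β i = α i) → x ∈ U β) :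
    CondD M U := by
  intro α hα
  refine Subset.antisymm (fun x hx => ?_) (iUnion_subset fun _ => Dk_subset hα)
  obtain ⟨k, hk⟩ := h α hα x hx
  exact mem_iUnion.2 ⟨k, mem_iInter₂.2 fun β hβ => hk β hβ.1 hβ.2⟩

variable [TopologicalSpace X]

lemma IsSmallBaseTop.isNetwork_Dk (hU : IsSmallBaseTop M U) (hD : CondD M U) :
    IsNetwork {D | ∃ α ∈ M, ∃ k : ℕ, D = Dk M U k α} := by
  intro O hO x hx
  obtain ⟨α, hα, hxα, hαO⟩ := hU.2.2 O hO x hx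
  rw [hD α hα] at hxα
  obtain ⟨k, hk⟩ := mem_iUnion.1 hxα
  exact ⟨Dk M U k α, ⟨α, hα, k, rfl⟩, hk, (Dk_subset hα).trans hαO⟩

end Dk

lemma decreasing_of_isAntichain {X : Type*} {M : Set (ℕ → ℕ)} (U : (ℕ → ℕ) → Set X)
    (hM : IsAntichain (· ≤ ·) M) : ∀ α ∈ M, ∀ β ∈ M, α ≤ β → U β ⊆ U α := by
  intro α hα β hβ hle
  rw [hM.eq hα hβ hle]

section AntichainCode

def graphIndicator (a : ℕ → ℕ) (m : ℕ) : ℕ :=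
  if a (Nat.unpair m).1 = (Nat.unpair m).2 then 1 else 0

def antichainCode (a : ℕ → ℕ) (m : ℕ) : ℕ :=
  if m % 2 = 0 then a (m / 2) else graphIndicator a (m / 2)

@[simp]
lemma antichainCode_two_mul (a : ℕ → ℕ) (i : ℕ) : antichainCode a (2 * i) = a i := by
  simp [antichainCode]

lemma antichainCode_two_mul_add_one (a : ℕ → ℕ) (m : ℕ) :
    antichainCode a (2 * m + 1) = graphIndicator a m := by
  have hdiv : (2 * m + 1) / 2 = m := by omega
  simp [antichainCode, hdiv]

/-- Comparing the graph indicators at the point `(i, a i)` forces `b i = a i`. -/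
lemma eq_of_antichainCode_le {a b : ℕ → ℕ} (h : antichainCode a ≤ antichainCode b) : a = b := by
  funext i
  by_contra hne
  have := h (2 * Nat.pair i (a i) + 1)
  simp [antichainCode_two_mul_add_one, graphIndicator, Ne.symm hne] at this

lemma isAntichain_image_antichainCode (S : Set (ℕ → ℕ)) :
    IsAntichain (· ≤ ·) (antichainCode '' S) := by
  rintro _ ⟨a, -, rfl⟩ _ ⟨b, -, rfl⟩ hne hle
  exact hne (congrArg antichainCode (eq_of_antichainCode_le hle))

end AntichainCode

section Network

variable {X : Type*}

def networkUnion (f : ℕ → Set X) (α : ℕ → ℕ) : Set X :=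
  ⋃ j, f (α (2 * j))

@[simp]
lemma networkUnion_antichainCode (f : ℕ → Set X) (c : ℕ → ℕ) :
    networkUnion f (antichainCode c) = ⋃ j, f (c j) := by
  simp [networkUnion]

variable [TopologicalSpace X]

lemma IsNetwork.mono {N N' : Set (Set X)} (hN : IsNetwork N) (h : N ⊆ N') : IsNetwork N' :=
  fun O hO x hx => (hN O hO x hx).imp fun _ ⟨hn, hxn⟩ => ⟨h hn, hxn⟩

lemma IsNetwork.exists_range {N : Set (Set X)} (hN : IsNetwork N) (hc : N.Countable) :
    ∃ f : ℕ → Set X, IsNetwork (range f) := by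
  obtain ⟨f, hf⟩ := (hc.insert ∅).exists_eq_range (insert_nonempty _ _)
  exact ⟨f, hf ▸ hN.mono (subset_insert _ _)⟩

lemma IsNetwork.exists_iUnion_eq {f : ℕ → Set X} (hf : IsNetwork (range f)) {O : Set X}
    (hO : IsOpen O) {x : X} (hx : x ∈ O) : ∃ c : ℕ → ℕ, ⋃ j, f (c j) = O := by
  obtain ⟨_, ⟨n, rfl⟩, -, hnO⟩ := hf O hO x hx
  obtain ⟨c, hc⟩ := (to_countable {n | f n ⊆ O}).exists_eq_range ⟨n, hnO⟩
  refine ⟨c, Subset.antisymm (iUnion_subset fun j => ?_) fun y hy => ?_⟩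
  · exact (hc ▸ mem_range_self j : c j ∈ {n | f n ⊆ O})
  · obtain ⟨_, ⟨m, rfl⟩, hym, hmO⟩ := hf O hO y hy
    obtain ⟨j, rfl⟩ : m ∈ range c := hc ▸ hmO
    exact mem_iUnion.2 ⟨j, hym⟩

def networkCodes (f : ℕ → Set X) : Set (ℕ → ℕ) :=
  antichainCode '' {c | IsOpen (⋃ j, f (c j))}

lemma isSmallBaseTop_networkUnion {f : ℕ → Set X} (hf : IsNetwork (range f)) :
    IsSmallBaseTop (networkCodes f) (networkUnion f) := by
  refine ⟨decreasing_of_isAntichain _ (isAntichain_image_antichainCode _), ?_, ?_⟩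
  · rintro _ ⟨c, hc, rfl⟩
    simpa using hc
  · intro O hO x hx
    obtain ⟨c, hc⟩ := hf.exists_iUnion_eq hO hx
    exact ⟨antichainCode c, ⟨c, by simpa [hc] using hO, rfl⟩, by simpa [hc], by simp [hc]⟩

lemma condD_networkUnion (f : ℕ → Set X) : CondD (networkCodes f) (networkUnion f) := by
  refine condD_of_forall_mem ?_
  rintro _ ⟨c, -, rfl⟩ x hx
  rw [networkUnion_antichainCode] at hx
  obtain ⟨j, hj⟩ := mem_iUnion.1 hx
  refine ⟨2 * j + 1, ?_⟩
  rintro _ ⟨c', -, rfl⟩ hagree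
  have hcj : c' j = c j := by simpa using hagree (2 * j) (by omega)
  exact mem_iUnion.2 ⟨j, by simpa [hcj] using hj⟩

end Network

theorem statement19 {X : Type*} [TopologicalSpace X] :
    (RegularSpace X → (∃ N : Set (Set X), N.Countable ∧ IsNetwork N) →
      ∃ (M : Set (ℕ → ℕ)) (U : (ℕ → ℕ) → Set X), IsSmallBaseTop M U ∧ CondD M U) ∧
    (∀ (M : Set (ℕ → ℕ)) (U : (ℕ → ℕ) → Set X), IsSmallBaseTop M U → CondD M U →
      ({D | ∃ α ∈ M, ∃ k : ℕ, D = Dk M U k α} : Set (Set X)).Countable ∧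
      IsNetwork {D | ∃ α ∈ M, ∃ k : ℕ, D = Dk M U k α}) := by
  refine ⟨fun _ ⟨N, hNc, hN⟩ => ?_, fun M U hU hD => ⟨countable_setOf_Dk M U, hU.isNetwork_Dk hD⟩⟩
  obtain ⟨f, hf⟩ := hN.exists_range hNc
  exact ⟨networkCodes f, networkUnion f, isSmallBaseTop_networkUnion hf, condD_networkUnion f⟩
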